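/- arXiv:1909.03168 — 3 statements merged into one kernel-verified Lean document; each statement's English description precedes it below -/
import Mathlib

section
/- Let H ∈ (1/2, 1) and t > 0. Then the function r ↦ (r^{1/2−H} − t^{1/2−H}) / (t−r)^{1/2+H} is Lebesgue integrable on the interval (0, t). (Near r = 0 the integrand behaves like r^{1/2−H} with 1/2−H > −1, and near r = t the numerator vanishes to first order so the integrand behaves like (t−r)^{1/2−H}.) -/
/-!
Split `(0, t)` at `t / 2`. Near `0` the integrand is `r ^ a - t ^ a`, integrable since `a > -1`,
times the continuous factor `(t - r) ^ (-b)`. Near `t`, `x ↦ x ^ a` is Lipschitz on `[t / 2, t]`,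
so the integrand is `O((t - r) ^ (1 - b))`, integrable since `b < 2`.
Here `a = 1/2 - H` and `b = 1/2 + H`.
-/

open MeasureTheory intervalIntegral Set

lemma exists_lipschitzOnWith_rpow_Icc (a : ℝ) {s : ℝ} (hs : 0 < s) (t : ℝ) :
    ∃ K, LipschitzOnWith K (fun x : ℝ => x ^ a) (Icc s t) := by
  refine LocallyLipschitzOn.exists_lipschitzOnWith_of_compact isCompact_Icc ?_
  refine ContDiffOn.locallyLipschitzOn (convex_Icc s t) fun x hx => ?_
  exact (Real.contDiffAt_rpow_const_of_ne (hs.trans_le hx.1).ne').contDiffWithinAt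

lemma intervalIntegrable_rpow_sub_rpow_div_rpow_left {a : ℝ} (b : ℝ) (ha : -1 < a) {c t : ℝ}
    (ht : 0 < t) (hc : c < t) :
    IntervalIntegrable (fun r => (r ^ a - t ^ a) / (t - r) ^ b) volume 0 c := by
  have hpos : ∀ r ∈ uIcc 0 c, 0 < t - r := fun r hr =>
    sub_pos.2 <| hr.2.trans_lt (max_lt ht hc)
  refine ((intervalIntegrable_rpow' ha).sub intervalIntegrable_const).mul_continuousOn
    (g := fun r => ((t - r) ^ b)⁻¹) ?_
  exact ((continuousOn_const.sub continuousOn_id).rpow_const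
    fun r hr => Or.inl (hpos r hr).ne').inv₀ fun r hr => (Real.rpow_pos_of_pos (hpos r hr) b).ne'

lemma intervalIntegrable_rpow_sub_rpow_div_rpow_right (a : ℝ) {b s t : ℝ} (hb : b < 2)
    (hs : 0 < s) (hst : s ≤ t) :
    IntervalIntegrable (fun r => (r ^ a - t ^ a) / (t - r) ^ b) volume s t := by
  obtain ⟨K, hK⟩ := exists_lipschitzOnWith_rpow_Icc a hs t
  have hmaj : IntervalIntegrable (fun r => K * (t - r) ^ (1 - b)) volume s t := by
    refine IntervalIntegrable.const_mul ?_ _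
    simpa using ((intervalIntegrable_rpow' (r := 1 - b) (by linarith)).comp_sub_left t
      (a := t - s) (b := t - t))
  refine hmaj.mono_fun' (Measurable.aestronglyMeasurable (by fun_prop)) ?_
  rw [uIoc_of_le hst, ← Measure.restrict_congr_set Ioo_ae_eq_Ioc]
  filter_upwards [ae_restrict_mem measurableSet_Ioo] with r hr
  have htr : 0 < t - r := sub_pos.2 hr.2
  have hlip : |r ^ a - t ^ a| ≤ K * (t - r) := by
    simpa [Real.dist_eq, abs_sub_comm r t, abs_of_pos htr] using
      hK.dist_le_mul r ⟨hr.1.le, hr.2.le⟩ t ⟨hst, le_rfl⟩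
  rw [Real.norm_eq_abs, abs_div, abs_of_pos (Real.rpow_pos_of_pos htr b), Real.rpow_sub htr,
    Real.rpow_one, div_le_iff₀ (Real.rpow_pos_of_pos htr b)]
  calc |r ^ a - t ^ a| ≤ K * (t - r) := hlip
    _ = K * ((t - r) / (t - r) ^ b) * (t - r) ^ b := by field_simp

/-- Integrability of `r ↦ (r^{1/2−H} − t^{1/2−H})/(t−r)^{1/2+H}` on `(0,t)` for `H ∈ (1/2,1)`. -/
theorem stmt1 (H : ℝ) (hH : H ∈ Set.Ioo (1/2 : ℝ) 1) (t : ℝ) (ht : 0 < t) :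
    IntervalIntegrable
      (fun r : ℝ => (r ^ (1/2 - H) - t ^ (1/2 - H)) / (t - r) ^ (1/2 + H))
      MeasureTheory.volume 0 t := by
  obtain ⟨-, hH⟩ := hH
  have hnear0 := intervalIntegrable_rpow_sub_rpow_div_rpow_left (1/2 + H)
    (a := 1/2 - H) (by linarith) ht (half_lt_self ht)
  have hneart := intervalIntegrable_rpow_sub_rpow_div_rpow_right (1/2 - H)
    (b := 1/2 + H) (by linarith) (half_pos ht) (half_le_self ht.le)
  exact hnear0.trans hneart
end

section
/- Let H ∈ (1/2, 1), ε ∈ (0, 1/2), T > 0, L ≥ 0, K_w ≥ 0. Let F : ℝ^d → ℝ^m be L-Lipschitz, x ∈ ℝ^d, and let w : [0, T] → ℝ^d satisfy w(0) = 0 and ‖w(u) − w(s)‖ ≤ K_w |u − s|^{H−ε} for all u, s ∈ [0, T]. For t ∈ (0, T] define G(t) := (1/Γ(3/2−H)) [ t^{1/2−H} F(x + w(t)) + (H−1/2) t^{H−1/2} ( ∫₀ᵗ (t^{1/2−H} − r^{1/2−H}) (t−r)^{−1/2−H} dr ) F(x + w(t)) + (H−1/2) t^{H−1/2} ∫₀ᵗ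 ( F(x + w(t)) − F(x + w(r)) ) (t−r)^{−1/2−H} r^{1/2−H} dr ]. Then there exist constants C₁ = C₁(H) > 0 and C₂ = C₂(H, ε) > 0 such that for all t ∈ (0, T]: ‖G(t)‖ ≤ C₁ t^{1/2−H} ( ‖F(x)‖ + L · sup_{u∈[0,T]} ‖w(u)‖ ) + C₂ L K_w t^{1/2−ε}. -/
/-!
Both kernels are homogeneous in `(t, r)`, so the substitution `r = t u` turns the first integral
into `t ^ (1 - 2H)` times a constant depending only on `H`. In the second integral, Lipschitz
continuity of `F` and Hölder continuity of `w` bound the integrand by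
`L K_w r ^ (1/2 - H) (t - r) ^ (-1/2 - ε)`, a Beta kernel that is integrable (dominate it by
its two one-sided singularities) and whose integral scales like `t ^ (1 - H - ε)`. The remaining
factor is `‖F (x + w t)‖ ≤ ‖F x‖ + L sup ‖w‖`.
-/

open MeasureTheory intervalIntegral Set Filter

theorem intervalIntegral_eq_rpow_mul_of_homogeneous {f : ℝ → ℝ → ℝ} {k t : ℝ} (ht : 0 < t)
    (hf : ∀ u ∈ Icc (0:ℝ) 1, f t (t * u) = t ^ k * f 1 u) :
    ∫ r in (0:ℝ)..t, f t r = t ^ (k + 1) * ∫ u in (0:ℝ)..1, f 1 u := by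
  have hscale : ∫ u in (0:ℝ)..1, f t (t * u) = t⁻¹ * ∫ r in (0:ℝ)..t, f t r := by
    simpa using integral_comp_mul_left (f t) ht.ne' (a := 0) (b := 1)
  have hcongr : ∫ u in (0:ℝ)..1, f t (t * u) = t ^ k * ∫ u in (0:ℝ)..1, f 1 u := by
    rw [← intervalIntegral.integral_const_mul]
    exact integral_congr fun u hu => hf u (by rwa [uIcc_of_le zero_le_one] at hu)
  rw [Real.rpow_add_one ht.ne', mul_right_comm, ← hcongr, hscale]
  field_simp

theorem integral_rpow_sub_rpow_mul_sub_rpow {t : ℝ} (p q : ℝ) (ht : 0 < t) :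
    ∫ r in (0:ℝ)..t, (t ^ p - r ^ p) * (t - r) ^ q =
      t ^ (p + q + 1) * ∫ u in (0:ℝ)..1, (1 - u ^ p) * (1 - u) ^ q := by
  rw [intervalIntegral_eq_rpow_mul_of_homogeneous (k := p + q)
    (f := fun t r => (t ^ p - r ^ p) * (t - r) ^ q) ht]
  · simp only [Real.one_rpow]
  · intro u ⟨hu0, hu1⟩
    rw [← mul_one_sub, Real.mul_rpow ht.le hu0, Real.mul_rpow ht.le (by linarith),
      Real.one_rpow, Real.rpow_add ht]
    ring

theorem integral_rpow_mul_sub_rpow {t : ℝ} (p q : ℝ) (ht : 0 < t) :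
    ∫ r in (0:ℝ)..t, r ^ p * (t - r) ^ q =
      t ^ (p + q + 1) * ∫ u in (0:ℝ)..1, u ^ p * (1 - u) ^ q := by
  rw [intervalIntegral_eq_rpow_mul_of_homogeneous (k := p + q)
    (f := fun t r => r ^ p * (t - r) ^ q) ht]
  intro u ⟨hu0, hu1⟩
  rw [← mul_one_sub, Real.mul_rpow ht.le hu0, Real.mul_rpow ht.le (by linarith),
    Real.rpow_add ht]
  ring

theorem rpow_mul_sub_rpow_le {p q t r : ℝ} (hp : p ≤ 0) (hq : q ≤ 0) (hr : 0 < r)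
    (hrt : r ≤ t) : r ^ p * (t - r) ^ q ≤ (t / 2) ^ q * r ^ p + (t / 2) ^ p * (t - r) ^ q := by
  have hrp := Real.rpow_nonneg hr.le p
  have hrq := Real.rpow_nonneg (sub_nonneg.2 hrt) q
  have htp := Real.rpow_nonneg (by linarith : 0 ≤ t / 2) p
  have htq := Real.rpow_nonneg (by linarith : 0 ≤ t / 2) q
  rcases le_or_gt r (t / 2) with hr2 | hr2
  · have := Real.rpow_le_rpow_of_nonpos (by linarith) (by linarith : t / 2 ≤ t - r) hq
    nlinarith
  · have := Real.rpow_le_rpow_of_nonpos (by linarith) hr2.le hp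
    nlinarith

theorem intervalIntegrable_rpow_mul_sub_rpow {p q t : ℝ} (hp : -1 < p) (hp0 : p ≤ 0)
    (hq : -1 < q) (hq0 : q ≤ 0) (ht : 0 < t) :
    IntervalIntegrable (fun r => r ^ p * (t - r) ^ q) volume 0 t := by
  have hsub : IntervalIntegrable (fun r => (t - r) ^ q) volume 0 t := by
    simpa using (intervalIntegrable_rpow' hq (a := t) (b := 0)).comp_sub_left t
  refine (((intervalIntegrable_rpow' hp).const_mul ((t / 2) ^ q)).add
    (hsub.const_mul ((t / 2) ^ p))).mono_fun' (by fun_prop) ?_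
  rw [uIoc_of_le ht.le]
  refine (ae_restrict_iff' measurableSet_Ioc).2 (Eventually.of_forall fun r ⟨hr0, hrt⟩ => ?_)
  have htr := sub_nonneg.2 hrt
  dsimp only
  rw [Real.norm_eq_abs, abs_of_nonneg (by positivity)]
  exact rpow_mul_sub_rpow_le hp0 hq0 hr0 hrt

theorem norm_integral_rpow_kernel_smul_sub_le {E : Type*} [NormedAddCommGroup E] [NormedSpace ℝ E]
    {f : ℝ → E} {M p q γ t : ℝ} (hp : -1 < p) (hp0 : p ≤ 0) (hqγ : -1 < q + γ)
    (hqγ0 : q + γ ≤ 0) (hM : 0 ≤ M) (ht : 0 < t)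
    (hf : ∀ r ∈ Ioc 0 t, ‖f t - f r‖ ≤ M * (t - r) ^ γ) :
    ‖∫ r in (0:ℝ)..t, ((t - r) ^ q * r ^ p) • (f t - f r)‖ ≤
      M * (t ^ (p + (q + γ) + 1) * ∫ u in (0:ℝ)..1, u ^ p * (1 - u) ^ (q + γ)) := by
  rw [← integral_rpow_mul_sub_rpow _ _ ht, ← intervalIntegral.integral_const_mul]
  refine norm_integral_le_of_norm_le ht.le ?_
    ((intervalIntegrable_rpow_mul_sub_rpow hp hp0 hqγ hqγ0 ht).const_mul M)
  refine Eventually.of_forall fun r hr => ?_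
  have hr0 := hr.1
  rcases hr.2.eq_or_lt with rfl | hrt
  · simp only [sub_self, norm_zero, smul_zero]
    positivity
  · have htr := sub_pos.2 hrt
    rw [norm_smul, Real.norm_eq_abs, abs_of_nonneg (by positivity), Real.rpow_add htr]
    calc (t - r) ^ q * r ^ p * ‖f t - f r‖ ≤ (t - r) ^ q * r ^ p * (M * (t - r) ^ γ) := by
          gcongr; exact hf r hr
      _ = _ := by ring

theorem bddAbove_range_norm_of_holder {E : Type*} [NormedAddCommGroup E] {w : ℝ → E}
    {K α T : ℝ} (hK : 0 ≤ K) (hα : 0 ≤ α) (hw0 : w 0 = 0)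
    (hw : ∀ u ∈ Icc (0:ℝ) T, ∀ s ∈ Icc (0:ℝ) T, ‖w u - w s‖ ≤ K * |u - s| ^ α) :
    BddAbove (range fun u : Icc (0:ℝ) T => ‖w u‖) := by
  refine ⟨K * T ^ α, ?_⟩
  rintro _ ⟨⟨u, hu0, huT⟩, rfl⟩
  have h := hw u ⟨hu0, huT⟩ 0 ⟨le_rfl, hu0.trans huT⟩
  rw [hw0, sub_zero, sub_zero, abs_of_nonneg hu0] at h
  exact h.trans (by gcongr)

section WeylFormula

variable {E : Type*} [NormedAddCommGroup E] [NormedSpace ℝ E]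

/-- `G(t)` for `f = F (x + w ·)`. -/
noncomputable def weylFormula (H : ℝ) (f : ℝ → E) (t : ℝ) : E :=
  (1 / Real.Gamma (3/2 - H)) •
    ((t ^ (1/2 - H)) • f t
      + ((H - 1/2) * t ^ (H - 1/2) *
          ∫ r in (0:ℝ)..t, (t ^ (1/2 - H) - r ^ (1/2 - H)) * (t - r) ^ (-(1/2) - H)) • f t
      + ((H - 1/2) * t ^ (H - 1/2)) •
          ∫ r in (0:ℝ)..t, ((t - r) ^ (-(1/2) - H) * r ^ (1/2 - H)) • (f t - f r))

noncomputable def weylConst₁ (H : ℝ) : ℝ :=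
  (1 + (H - 1/2) * |∫ u in (0:ℝ)..1, (1 - u ^ (1/2 - H)) * (1 - u) ^ (-(1/2) - H)|) /
    Real.Gamma (3/2 - H)

noncomputable def weylConst₂ (H α : ℝ) : ℝ :=
  (H - 1/2) * (∫ u in (0:ℝ)..1, u ^ (1/2 - H) * (1 - u) ^ (-(1/2) - H + α)) /
    Real.Gamma (3/2 - H)

theorem weylConst₁_pos {H : ℝ} (hH : 1/2 ≤ H) (hH' : H < 3/2) : 0 < weylConst₁ H :=
  div_pos (by positivity) (Real.Gamma_pos_of_pos (by linarith))

theorem weylConst₂_pos {H α : ℝ} (hH : 1/2 < H) (hH' : H < 3/2) (hα : H - 1/2 < α)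
    (hα' : α ≤ H + 1/2) : 0 < weylConst₂ H α := by
  have hB := intervalIntegral_pos_of_pos_on
    (intervalIntegrable_rpow_mul_sub_rpow (p := 1/2 - H) (q := -(1/2) - H + α)
      (by linarith) (by linarith) (by linarith) (by linarith) one_pos)
    (fun u hu => mul_pos (Real.rpow_pos_of_pos hu.1 _) (Real.rpow_pos_of_pos (sub_pos.2 hu.2) _))
    one_pos
  exact div_pos (mul_pos (by linarith) hB) (Real.Gamma_pos_of_pos (by linarith))

theorem norm_weylFormula_le {H α M t : ℝ} {f : ℝ → E} (hH : 1/2 ≤ H) (hH' : H < 3/2)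
    (hα : H - 1/2 < α) (hα' : α ≤ H + 1/2) (hM : 0 ≤ M) (ht : 0 < t)
    (hf : ∀ r ∈ Ioc 0 t, ‖f t - f r‖ ≤ M * (t - r) ^ α) :
    ‖weylFormula H f t‖ ≤
      weylConst₁ H * t ^ (1/2 - H) * ‖f t‖ + weylConst₂ H α * M * t ^ (α + 1/2 - H) := by
  unfold weylFormula weylConst₁ weylConst₂
  set J := ∫ u in (0:ℝ)..1, (1 - u ^ (1/2 - H)) * (1 - u) ^ (-(1/2) - H)
  set B := ∫ u in (0:ℝ)..1, u ^ (1/2 - H) * (1 - u) ^ (-(1/2) - H + α)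
  have hΓ : 0 < 1 / Real.Gamma (3/2 - H) := one_div_pos.2 (Real.Gamma_pos_of_pos (by linarith))
  have hc : 0 ≤ (H - 1/2) * t ^ (H - 1/2) := mul_nonneg (by linarith) (by positivity)
  have hterm₁ : ‖t ^ (1/2 - H) • f t‖ = t ^ (1/2 - H) * ‖f t‖ := by
    rw [norm_smul, Real.norm_eq_abs, abs_of_nonneg (by positivity)]
  have hterm₂ : ‖((H - 1/2) * t ^ (H - 1/2) * (t ^ (1/2 - H + (-(1/2) - H) + 1) * J)) • f t‖ =
      (H - 1/2) * |J| * (t ^ (1/2 - H) * ‖f t‖) := by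
    rw [norm_smul, Real.norm_eq_abs, abs_mul _ (_ * J), abs_of_nonneg hc, abs_mul,
      abs_of_nonneg (by positivity)]
    have e : t ^ (H - 1/2) * t ^ (1/2 - H + (-(1/2) - H) + 1) = t ^ (1/2 - H) := by
      rw [← Real.rpow_add ht]; ring_nf
    rw [← e]; ring
  have hterm₃ : ‖((H - 1/2) * t ^ (H - 1/2)) •
      ∫ r in (0:ℝ)..t, ((t - r) ^ (-(1/2) - H) * r ^ (1/2 - H)) • (f t - f r)‖ ≤
      (H - 1/2) * B * (M * t ^ (α + 1/2 - H)) := by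
    have e : t ^ (H - 1/2) * t ^ (1/2 - H + (-(1/2) - H + α) + 1) = t ^ (α + 1/2 - H) := by
      rw [← Real.rpow_add ht]; ring_nf
    rw [norm_smul, Real.norm_eq_abs, abs_of_nonneg hc, ← e]
    calc _ ≤ (H - 1/2) * t ^ (H - 1/2) * (M * (t ^ (1/2 - H + (-(1/2) - H + α) + 1) * B)) := by
          gcongr
          exact norm_integral_rpow_kernel_smul_sub_le (by linarith) (by linarith) (by linarith)
            (by linarith) hM ht hf
      _ = _ := by ring
  rw [norm_smul, Real.norm_eq_abs, abs_of_pos hΓ, integral_rpow_sub_rpow_mul_sub_rpow _ _ ht]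
  calc _ ≤ 1 / Real.Gamma (3/2 - H) * (t ^ (1/2 - H) * ‖f t‖
          + (H - 1/2) * |J| * (t ^ (1/2 - H) * ‖f t‖)
          + (H - 1/2) * B * (M * t ^ (α + 1/2 - H))) := by
        gcongr
        exact (norm_add₃_le ..).trans (by rw [hterm₁, hterm₂]; gcongr)
    _ = _ := by ring

end WeylFormula

/-- Pointwise bound on the Weyl-representation formula `G(t)` for
`K_H^{-1}(∫₀^· F(x+w(u)) du)`, with constants `C₁ = C₁(H)` and `C₂ = C₂(H,ε)`. -/
theorem stmt4 (H ε : ℝ) (hH : H ∈ Set.Ioo (1/2 : ℝ) 1) (hε : ε ∈ Set.Ioo (0:ℝ) (1/2)) :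
    ∃ C₁ > (0:ℝ), ∃ C₂ > (0:ℝ),
      ∀ (d m : ℕ) (T L Kw : ℝ), 0 < T → 0 ≤ L → 0 ≤ Kw →
      ∀ (F : EuclideanSpace ℝ (Fin d) → EuclideanSpace ℝ (Fin m))
        (x : EuclideanSpace ℝ (Fin d)) (w : ℝ → EuclideanSpace ℝ (Fin d)),
        (∀ a b, ‖F a - F b‖ ≤ L * ‖a - b‖) →
        w 0 = 0 →
        (∀ u ∈ Set.Icc (0:ℝ) T, ∀ s ∈ Set.Icc (0:ℝ) T,
          ‖w u - w s‖ ≤ Kw * |u - s| ^ (H - ε)) →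
        ∀ t ∈ Set.Ioc (0:ℝ) T,
          ‖(1 / Real.Gamma (3/2 - H)) •
              ((t ^ (1/2 - H)) • F (x + w t)
                + ((H - 1/2) * t ^ (H - 1/2) *
                    ∫ r in (0:ℝ)..t,
                      (t ^ (1/2 - H) - r ^ (1/2 - H)) * (t - r) ^ (-(1/2) - H)) •
                      F (x + w t)
                + ((H - 1/2) * t ^ (H - 1/2)) •
                    ∫ r in (0:ℝ)..t,
                      ((t - r) ^ (-(1/2) - H) * r ^ (1/2 - H)) •
                        (F (x + w t) - F (x + w r)))‖
            ≤ C₁ * t ^ (1/2 - H) * (‖F x‖ + L * ⨆ u : Set.Icc (0:ℝ) T, ‖w ↑u‖)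
              + C₂ * L * Kw * t ^ (1/2 - ε) := by
  obtain ⟨hH₁, hH₂⟩ := hH
  obtain ⟨hε₁, hε₂⟩ := hε
  refine ⟨weylConst₁ H, weylConst₁_pos hH₁.le (by linarith), weylConst₂ H (H - ε),
    weylConst₂_pos hH₁ (by linarith) (by linarith) (by linarith), ?_⟩
  intro d m T L Kw hT hL hKw F x w hLip hw0 hHol t ⟨ht0, htT⟩
  have hΔ : ∀ r ∈ Ioc 0 t, ‖F (x + w t) - F (x + w r)‖ ≤ L * Kw * (t - r) ^ (H - ε) := by
    intro r ⟨hr0, hrt⟩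
    calc ‖F (x + w t) - F (x + w r)‖ ≤ L * ‖w t - w r‖ := by
          simpa only [add_sub_add_left_eq_sub] using hLip (x + w t) (x + w r)
      _ ≤ L * (Kw * |t - r| ^ (H - ε)) := by
          gcongr; exact hHol t ⟨ht0.le, htT⟩ r ⟨hr0.le, hrt.trans htT⟩
      _ = L * Kw * (t - r) ^ (H - ε) := by rw [abs_of_nonneg (by linarith)]; ring
  have hN : ‖F (x + w t)‖ ≤ ‖F x‖ + L * ⨆ u : Icc (0:ℝ) T, ‖w u‖ := by
    have hwS : ‖w t‖ ≤ ⨆ u : Icc (0:ℝ) T, ‖w u‖ :=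
      le_ciSup (bddAbove_range_norm_of_holder hKw (by linarith) hw0 hHol)
        (⟨t, ht0.le, htT⟩ : Icc (0:ℝ) T)
    calc ‖F (x + w t)‖ ≤ ‖F x‖ + ‖F (x + w t) - F x‖ := norm_le_norm_add_norm_sub' _ _
      _ ≤ ‖F x‖ + L * ‖x + w t - x‖ := by gcongr; exact hLip _ _
      _ ≤ _ := by rw [add_sub_cancel_left]; gcongr
  have hG := norm_weylFormula_le (f := fun r => F (x + w r)) hH₁.le (by linarith)
    (by linarith) (by linarith) (mul_nonneg hL hKw) ht0 hΔ
  rw [show H - ε + 1/2 - H = 1/2 - ε by ring, ← mul_assoc] at hG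
  have := weylConst₁_pos hH₁.le (by linarith)
  exact hG.trans (by gcongr)
end

section
/- Let d₁, d₂, l ∈ ℕ, T > 0, L ≥ 0, x ∈ ℝ^{d₁}. Let w, φ : [0, T] → ℝ^{d₁} be continuous, let g : [0, T] → ℝ^l be continuously differentiable, let k : [0, T] → ℝ^l be continuous, and let σ : ℝ^{d₁} → M_{d₂×l}(ℝ) be continuously differentiable with ‖Dσ(z)‖ ≤ L for all z. Then the map ε ↦ ∫₀ᵀ σ( x + w(u) + ε φ(u) ) ( g'(u) + ε k(u) ) du, from ℝ to ℝ^{d₂}, is differentiable at ε = 0 with derivative ∫₀ᵀ σ(x + w(u)) k(u) du + ∫₀ᵀ (Dσ(x + w(u)) φ(u)) g'(u) du. -/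
/-!
Differentiate under the integral sign. On the compact set `[-1, 1] × [0, T]` the
`ε`-derivative of the integrand, `σ(z_ε) k + (Dσ(z_ε) φ)(g' + ε k)` with `z_ε = x + w + ε φ`,
is jointly continuous, hence bounded by a constant, which serves as the dominating function. The derivative of the integrand itself is the product rule for the continuous
bilinear map `(A, v) ↦ A *ᵥ v`.
-/

open MeasureTheory intervalIntegral Matrix Set Function

attribute [local instance] Matrix.normedAddCommGroup Matrix.normedSpace

noncomputable def Matrix.mulVecCLM (m n : Type*) [Fintype m] [Fintype n] :
    Matrix m n ℝ →L[ℝ] (n → ℝ) →L[ℝ] (m → ℝ) :=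
  LinearMap.toContinuousLinearMap
    (LinearMap.toContinuousLinearMap.toLinearMap ∘ₗ Matrix.mulVecBilin ℝ ℝ)

theorem HasDerivAt.matrix_mulVec {m n : Type*} [Fintype m] [Fintype n]
    {A : ℝ → Matrix m n ℝ} {A' : Matrix m n ℝ} {v : ℝ → n → ℝ} {v' : n → ℝ} {t : ℝ}
    (hA : HasDerivAt A A' t) (hv : HasDerivAt v v' t) :
    HasDerivAt (fun s => A s *ᵥ v s) (A t *ᵥ v' + A' *ᵥ v t) t :=
  (mulVecCLM m n).hasDerivAt_of_bilinear (fun _ => hA) (fun _ => hv)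

theorem intervalIntegral.hasDerivAt_integral_of_continuousOn {E : Type*}
    [NormedAddCommGroup E] [NormedSpace ℝ E] {F F' : ℝ → ℝ → E} {K : Set ℝ} {a b x₀ : ℝ}
    (hK : IsCompact K) (hKx₀ : K ∈ nhds x₀)
    (hF : ∀ x ∈ K, ContinuousOn (F x) (uIcc a b))
    (hF' : ContinuousOn (uncurry F') (K ×ˢ uIcc a b))
    (hderiv : ∀ t ∈ uIcc a b, ∀ x ∈ K, HasDerivAt (F · t) (F' x t) x) :
    HasDerivAt (fun x => ∫ t in a..b, F x t) (∫ t in a..b, F' x₀ t) x₀ := by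
  obtain ⟨C, hC⟩ := (hK.prod isCompact_uIcc).exists_bound_of_continuousOn hF'
  have hx₀ : x₀ ∈ K := mem_of_mem_nhds hKx₀
  have hF'x₀ : ContinuousOn (F' x₀) (uIcc a b) :=
    hF'.comp (continuousOn_const.prodMk continuousOn_id) fun t ht => ⟨hx₀, ht⟩
  refine (hasDerivAt_integral_of_dominated_loc_of_deriv_le (bound := fun _ => C) hKx₀
    (Filter.eventually_of_mem hKx₀ fun x hx => ?_) (hF x₀ hx₀).intervalIntegrable ?_
    (ae_of_all _ fun t ht x hx => hC (x, t) ⟨hx, uIoc_subset_uIcc ht⟩)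
    intervalIntegrable_const
    (ae_of_all _ fun t ht x hx => hderiv t (uIoc_subset_uIcc ht) x hx)).2
  · exact ((hF x hx).mono uIoc_subset_uIcc).aestronglyMeasurable measurableSet_uIoc
  · exact (hF'x₀.mono uIoc_subset_uIcc).aestronglyMeasurable measurableSet_uIoc

theorem stmt12_general (d₁ d₂ l : ℕ) (T : ℝ) (hT : 0 < T) (x : Fin d₁ → ℝ)
    (w φ : ℝ → (Fin d₁ → ℝ))
    (hw : ContinuousOn w (Set.Icc 0 T)) (hφ : ContinuousOn φ (Set.Icc 0 T))
    (g : ℝ → (Fin l → ℝ)) (hg : ContDiff ℝ 1 g)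
    (k : ℝ → (Fin l → ℝ)) (hk : ContinuousOn k (Set.Icc 0 T))
    (σ : (Fin d₁ → ℝ) → Matrix (Fin d₂) (Fin l) ℝ) (hσ : ContDiff ℝ 1 σ) :
    HasDerivAt
      (fun ε : ℝ =>
        ∫ u in (0:ℝ)..T, (σ (x + w u + ε • φ u)).mulVec (deriv g u + ε • k u))
      ((∫ u in (0:ℝ)..T, (σ (x + w u)).mulVec (k u))
        + ∫ u in (0:ℝ)..T, (fderiv ℝ σ (x + w u) (φ u)).mulVec (deriv g u))
      0 := by
  have hσc : Continuous σ := hσ.continuous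
  have hDσ : Continuous (fderiv ℝ σ) := hσ.continuous_fderiv one_ne_zero
  have hg' : Continuous (deriv g) := hg.continuous_deriv le_rfl
  rw [← uIcc_of_le hT.le] at hw hφ hk
  have hsnd : (Icc (-1 : ℝ) 1 ×ˢ uIcc 0 T).MapsTo Prod.snd (uIcc 0 T) := fun p hp => hp.2
  have hline : ∀ {n : ℕ} (p v : Fin n → ℝ) (ε : ℝ), HasDerivAt (fun s : ℝ => p + s • v) v ε :=
    fun p v ε => by simpa using ((hasDerivAt_id ε).smul_const v).const_add p
  have hderiv := hasDerivAt_integral_of_continuousOn (x₀ := 0) isCompact_Icc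
    (Icc_mem_nhds (by norm_num : (-1 : ℝ) < 0) one_pos)
    (F := fun ε u => σ (x + w u + ε • φ u) *ᵥ (deriv g u + ε • k u))
    (F' := fun ε u => σ (x + w u + ε • φ u) *ᵥ k u
      + fderiv ℝ σ (x + w u + ε • φ u) (φ u) *ᵥ (deriv g u + ε • k u))
    (fun ε _ => by fun_prop)
    (by
      have hw₂ := hw.comp continuousOn_snd hsnd
      have hφ₂ := hφ.comp continuousOn_snd hsnd
      have hk₂ := hk.comp continuousOn_snd hsnd
      simp only [uncurry_def]
      fun_prop)
    (fun u _ ε _ => ((hσ.differentiable one_ne_zero _).hasFDerivAt.comp_hasDerivAt ε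
      (hline (x + w u) (φ u) ε)).matrix_mulVec (hline (deriv g u) (k u) ε))
  simp only [zero_smul, add_zero] at hderiv
  rwa [integral_add (ContinuousOn.intervalIntegrable (by fun_prop))
    (ContinuousOn.intervalIntegrable (by fun_prop))] at hderiv

/-- Smooth-path form of the Cameron–Martin directional derivative: the map
`ε ↦ ∫₀ᵀ σ(x + w(u) + ε φ(u)) (g'(u) + ε k(u)) du` is differentiable at `ε = 0` with
derivative `∫₀ᵀ σ(x + w(u)) k(u) du + ∫₀ᵀ (Dσ(x + w(u)) φ(u)) g'(u) du`. -/
theorem stmt12 (d₁ d₂ l : ℕ) (T L : ℝ) (hT : 0 < T) (hL : 0 ≤ L) (x : Fin d₁ → ℝ)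
    (w φ : ℝ → (Fin d₁ → ℝ))
    (hw : ContinuousOn w (Set.Icc 0 T)) (hφ : ContinuousOn φ (Set.Icc 0 T))
    (g : ℝ → (Fin l → ℝ)) (hg : ContDiff ℝ 1 g)
    (k : ℝ → (Fin l → ℝ)) (hk : ContinuousOn k (Set.Icc 0 T))
    (σ : (Fin d₁ → ℝ) → Matrix (Fin d₂) (Fin l) ℝ) (hσ : ContDiff ℝ 1 σ)
    (hσL : ∀ z, (fderiv ℝ σ z).opNorm ≤ L) :
    HasDerivAt
      (fun ε : ℝ =>
        ∫ u in (0:ℝ)..T, (σ (x + w u + ε • φ u)).mulVec (deriv g u + ε • k u))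
      ((∫ u in (0:ℝ)..T, (σ (x + w u)).mulVec (k u))
        + ∫ u in (0:ℝ)..T, (fderiv ℝ σ (x + w u) (φ u)).mulVec (deriv g u))
      0 :=
  stmt12_general d₁ d₂ l T hT x w φ hw hφ g hg k hk σ hσ
end
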